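/- Let P, Q be ω-posets with P regular, and φ : SP → SQ a continuous map between spectra. Then the relations ⊒_φ = {(q,p) : q̄_S ⊇ φ[p̄_S]} and ⊐_φ = {(q,p) : q_S ⊇ φ[p̄_S]} are refiners; if Q is also regular, then φ(S) = S^{⊑_φ ⊲} for every S ∈ SP (and likewise for ⊐_φ). -/

import Mathlib

namespace OP

section OmegaPoset

variable (P : Type*) [PartialOrder P]

/-- The n-th cone of the poset: `cone 0` is the set of maximal elements. -/
def cone : ℕ → Set P
  | 0 => {p | ∀ q, ¬ p < q}
  | n + 1 => {p | ∀ q, p < q → q ∈ cone n}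

/-- The n-th level: atoms (minimal elements) of the n-th cone. -/
def level (n : ℕ) : Set P := {p | p ∈ cone P n ∧ ∀ q, q < p → q ∉ cone P n}

/-- An ω-poset: all levels finite and every element in some cone. -/
def IsOmegaPoset : Prop := (∀ n, (level P n).Finite) ∧ ∀ p : P, ∃ n, p ∈ cone P n

variable {P}

/-- `refines A C` : every element of `A` lies below some element of `C` (`A ≤ C`). -/
def refines (A C : Set P) : Prop := ∀ a ∈ A, ∃ c ∈ C, a ≤ c

/-- A cap is a subset refined by some level. -/
def IsCap (C : Set P) : Prop := ∃ n, refines (level P n) C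

/-- A selector meets every cap. -/
def IsSelector (S : Set P) : Prop := ∀ C : Set P, IsCap C → (S ∩ C).Nonempty

/-- `wedge p q` : `p` and `q` have a common lower bound. -/
def wedge (p q : P) : Prop := ∃ r, r ≤ p ∧ r ≤ q

def wedgeSet (p : P) : Set P := {q | wedge p q}

/-- The adjacency relation `p ⌅ q`. -/
def barwedge (p q : P) : Prop := ∀ C : Set P, IsCap C → ∃ c ∈ C, wedge p c ∧ wedge c q

/-- `p ⊲_C q`. -/
def starBelowOn (C : Set P) (p q : P) : Prop := ∀ c ∈ C, wedge p c → c ≤ q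

/-- The star-below relation `p ⊲ q`. -/
def starBelow (p q : P) : Prop := ∃ n, starBelowOn (level P n) p q

/-- A clique: pairwise adjacent set. -/
def IsClique (X : Set P) : Prop := ∀ p ∈ X, ∀ q ∈ X, barwedge p q

/-- Unbounded subset: meets `C^≥` for every cap `C`. -/
def IsUnbounded (X : Set P) : Prop := ∀ C : Set P, IsCap C → ∃ u ∈ X, ∃ c ∈ C, u ≤ c

variable (P)

/-- Regularity: every level is eventually star-refined by a later level. -/
def IsRegular : Prop :=
  ∀ m, ∃ n, m < n ∧ ∀ p ∈ level P n, ∃ q ∈ level P m, starBelow p q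

/-- The spectrum: minimal selectors. -/
def Spec : Set (Set P) := {S | IsSelector S ∧ ∀ T ⊆ S, IsSelector T → T = S}

def SpecT : Type _ := {S : Set P // S ∈ Spec P}

instance : TopologicalSpace (SpecT P) :=
  TopologicalSpace.generateFrom {U | ∃ p : P, U = {S : SpecT P | p ∈ S.1}}

/-- The clique-spectrum: unbounded maximal cliques. -/
def CliqueSpec : Set (Set P) :=
  {X | IsUnbounded X ∧ IsClique X ∧ ∀ Y : Set P, IsClique Y → X ⊆ Y → Y = X}

def CliqueSpecT : Type _ := {X : Set P // X ∈ CliqueSpec P}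

instance : TopologicalSpace (CliqueSpecT P) :=
  TopologicalSpace.generateFrom {U | ∃ p : P, U = {X : CliqueSpecT P | p ∉ X.1}}

variable {P}

/-- The basic open set `p_S`. -/
def pSOpen (p : P) : Set (SpecT P) := {S | p ∈ S.1}

/-- The closed set `p̄_S = {S : S ⊆ p^∧}`. -/
def pSBar (p : P) : Set (SpecT P) := {S | S.1 ⊆ wedgeSet p}

/-- Prime ω-poset: every basic open set is nonempty. -/
def IsPrimePoset (P : Type*) [PartialOrder P] : Prop := ∀ p : P, (pSOpen p).Nonempty

end OmegaPoset

end OP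

namespace OP

section Refiners

variable {P Q : Type*} [PartialOrder P] [PartialOrder Q]

/-- A refiner: every cap of `Q` is refined through the relation by some cap of `P`. -/
def IsRefinerRel (R : Q → P → Prop) : Prop :=
  ∀ C : Set Q, IsCap C → ∃ B : Set P, IsCap B ∧ ∀ b ∈ B, ∃ c ∈ C, R c b

/-- `∧`-preserving: `⊐ ∘ ∧ ∘ ⊏ ⊆ ∧`. -/
def WedgePres (R : Q → P → Prop) : Prop :=
  ∀ q p p' q', R q p → wedge p p' → R q' p' → wedge q q'

/-- `⌅`-preserving: `⊐ ∘ ⌅ ∘ ⊏ ⊆ ⌅`. -/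
def BarwedgePres (R : Q → P → Prop) : Prop :=
  ∀ q p p' q', R q p → barwedge p p' → R q' p' → barwedge q q'

/-- The star `⊐*` of a relation: `q ⊐* p` iff some cap `C` has `C ∩ p^∧ ⊏ q`. -/
def relStar (R : Q → P → Prop) (q : Q) (p : P) : Prop :=
  ∃ C : Set P, IsCap C ∧ ∀ c ∈ C, wedge p c → R q c

/-- Composition `▷ ∘ ⊐` with the star-above relation on `Q`. -/
def starAboveComp (R : Q → P → Prop) : Q → P → Prop :=
  fun q p => ∃ q', starBelow q' q ∧ R q' p

/-- A strong refiner: a `∧`-preserving refiner with `⊐ = ▷ * ⊐`. -/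
def IsStrongRefiner (R : Q → P → Prop) : Prop :=
  IsRefinerRel R ∧ WedgePres R ∧ ∀ q p, R q p ↔ relStar (starAboveComp R) q p

/-- `φ` is the continuous map associated to `R`, i.e. `φ(S) = S^{⊏ ⊲}`. -/
def specMapOf (R : Q → P → Prop) (φ : SpecT P → SpecT Q) : Prop :=
  ∀ S : SpecT P, (φ S).1 = {r : Q | ∃ p ∈ S.1, ∃ q, R q p ∧ starBelow q r}

/-- The relation `⊒_φ`: `q ⊒_φ p` iff `q̄_S ⊇ φ[p̄_S]`. -/
def relBarPhi (φ : SpecT P → SpecT Q) (q : Q) (p : P) : Prop :=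
  ∀ S : SpecT P, S ∈ pSBar p → φ S ∈ pSBar q

/-- The relation `⊐_φ`: `q ⊐_φ p` iff `q_S ⊇ φ[p̄_S]`. -/
def relPhi (φ : SpecT P → SpecT Q) (q : Q) (p : P) : Prop :=
  ∀ S : SpecT P, S ∈ pSBar p → φ S ∈ pSOpen q

/-- An arrow: a finite relation with `← ∘ ⌅` co-surjective. -/
def IsArrow (A : Q → P → Prop) : Prop :=
  {x : Q × P | A x.1 x.2}.Finite ∧ ∀ p : P, ∃ q p', A q p' ∧ barwedge p' p

/-- `A ≤ B` for relations: `A ⊆ ≤ ∘ B ∘ ≥`. -/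
def arrowLe (A B : Q → P → Prop) : Prop :=
  ∀ q p, A q p → ∃ q' p', q ≤ q' ∧ p ≤ p' ∧ B q' p'

/-- The relation `⟨←` of an arrow: `q ⟨← p` iff `p^{⌅→} ⊲ q`. -/
def angleRel (A : Q → P → Prop) (q : Q) (p : P) : Prop :=
  ∀ q', (∃ p', barwedge p p' ∧ A q' p') → starBelow q' q

/-- The relation `⋂ₙ (←ₙ)̄_S` on spectra determined by a sequence of arrows. -/
def seqGraph (A : ℕ → Q → P → Prop) (T : SpecT Q) (S : SpecT P) : Prop :=
  ∀ n, ∃ q p, A n q p ∧ T.1 ⊆ wedgeSet q ∧ S.1 ⊆ wedgeSet p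

end Refiners

end OP

/-!
A minimal selector `S` is up-closed and linked, and each `p ∈ S` is the only point of `S` on
some cap; hence `p ⊲ r` forces `r ∈ S`. Regularity lets one interpolate `⊲` inside `S`, so every
open neighbourhood of `S` contains a closed basic neighbourhood `p̄_S` with `p ∈ S`; applied to
`φ⁻¹(q_S)` this gives both halves of `φ(S) = S^{⊑_φ ⊲}`. For the refiner property, the set
`B = {p | ∃ c ∈ C, c ⊐_φ p}` meets every minimal selector; since the levels are finite, Zorn's
lemma gives a minimal selector inside any selector, and so a set meeting every minimal selector
is a cap (otherwise the points with nothing of `B` above them would form a selector avoiding `B`).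
-/

namespace OP

section Poset

variable {P : Type*} [PartialOrder P]

lemma mem_cone_of_le (n : ℕ) {p q : P} (hp : p ∈ cone P n) (hpq : p ≤ q) : q ∈ cone P n := by
  cases n <;> exact fun r hr => hp r (hpq.trans_lt hr)

lemma cone_subset_cone_succ (n : ℕ) : cone P n ⊆ cone P (n + 1) :=
  fun _ hp _ hq => mem_cone_of_le n hp hq.le

lemma exists_mem_level_le_of_mem_level_succ {n : ℕ} {a : P} (ha : a ∈ level P (n + 1)) :
    ∃ c ∈ level P n, a ≤ c := by
  by_cases h : a ∈ cone P n
  · exact ⟨a, ⟨h, fun q hq hq' => ha.2 q hq (cone_subset_cone_succ n hq')⟩, le_rfl⟩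
  cases n with
  | zero =>
    obtain ⟨q, hq⟩ : ∃ q, a < q := by simpa [cone] using h
    exact ⟨q, ⟨ha.1 q hq, fun s hs hs0 => hs0 q hs⟩, hq.le⟩
  | succ m =>
    obtain ⟨q, hq, hqm⟩ : ∃ q, a < q ∧ q ∉ cone P m := by simpa [cone] using h
    exact ⟨q, ⟨ha.1 q hq, fun s hs hs1 => hqm (hs1 q hs)⟩, hq.le⟩

lemma refines_level_of_le {m n : ℕ} (h : m ≤ n) : refines (level P n) (level P m) := by
  induction h with
  | refl => exact fun a ha => ⟨a, ha, le_rfl⟩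
  | step _ ih =>
    intro a ha
    obtain ⟨b, hb, hab⟩ := exists_mem_level_le_of_mem_level_succ ha
    obtain ⟨c, hc, hbc⟩ := ih b hb
    exact ⟨c, hc, hab.trans hbc⟩

lemma refines.trans {A B C : Set P} (hAB : refines A B) (hBC : refines B C) : refines A C := by
  intro a ha
  obtain ⟨b, hb, hab⟩ := hAB a ha
  obtain ⟨c, hc, hbc⟩ := hBC b hb
  exact ⟨c, hc, hab.trans hbc⟩

lemma IsCap.eventually_refines {C : Set P} (hC : IsCap C) :
    ∃ m, ∀ n ≥ m, refines (level P n) C := by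
  obtain ⟨m, hm⟩ := hC
  exact ⟨m, fun n hn => (refines_level_of_le hn).trans hm⟩

lemma isCap_level (n : ℕ) : IsCap (level P n) :=
  ⟨n, fun a ha => ⟨a, ha, le_rfl⟩⟩

lemma IsCap.exists_finite_subset (hfin : ∀ n, (level P n).Finite) {C : Set P} (hC : IsCap C) :
    ∃ C₀ ⊆ C, C₀.Finite ∧ IsCap C₀ := by
  obtain ⟨m, hm⟩ := hC
  choose! f hfC hle using hm
  exact ⟨f '' level P m, Set.image_subset_iff.2 hfC, (hfin m).image f,
    m, fun a ha => ⟨f a, Set.mem_image_of_mem f ha, hle a ha⟩⟩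

lemma starBelow.trans_le {p q r : P} (hpq : starBelow p q) (hqr : q ≤ r) : starBelow p r := by
  obtain ⟨n, hn⟩ := hpq
  exact ⟨n, fun c hc hpc => (hn c hc hpc).trans hqr⟩

end Poset

section Selectors

variable {P : Type*} [PartialOrder P]

/-- On a finite cap `C₀` the traces `s ∩ C₀` of the chain have a least element. -/
lemma isSelector_sInter_of_isChain (hfin : ∀ n, (level P n).Finite) {c : Set (Set P)}
    (hsel : ∀ s ∈ c, IsSelector s) (hchain : IsChain (· ⊆ ·) c) (hne : c.Nonempty) :
    IsSelector (⋂₀ c) := by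
  intro C hC
  obtain ⟨C₀, hC₀C, hC₀fin, hC₀cap⟩ := hC.exists_finite_subset hfin
  have htraces : ((· ∩ C₀) '' c).Finite :=
    hC₀fin.finite_subsets.subset (Set.image_subset_iff.2 fun _ _ => Set.inter_subset_right)
  obtain ⟨s₀, hs₀, hmin⟩ := Set.Finite.exists_minimalFor' (· ∩ C₀) c htraces hne
  obtain ⟨x, hxs₀, hxC₀⟩ := hsel s₀ hs₀ C₀ hC₀cap
  refine ⟨x, Set.mem_sInter.2 fun s hs => ?_, hC₀C hxC₀⟩
  rcases hchain.total hs₀ hs with hsub | hsub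
  · exact hsub hxs₀
  · exact (hmin hs (Set.inter_subset_inter_left C₀ hsub) ⟨hxs₀, hxC₀⟩).1

lemma IsSelector.exists_spec_subset (hfin : ∀ n, (level P n).Finite) {T : Set P}
    (hT : IsSelector T) : ∃ S ∈ Spec P, S ⊆ T := by
  obtain ⟨S, hST, hmin⟩ := zorn_superset_nonempty {s | s ⊆ T ∧ IsSelector s}
    (fun c hc hchain hne => ⟨⋂₀ c,
      ⟨(Set.sInter_subset_of_mem hne.some_mem).trans (hc hne.some_mem).1,
        isSelector_sInter_of_isChain hfin (fun s hs => (hc hs).2) hchain hne⟩,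
      fun _ => Set.sInter_subset_of_mem⟩) T ⟨le_rfl, hT⟩
  exact ⟨S, ⟨hmin.1.2, fun U hUS hU =>
    hUS.antisymm (hmin.2 ⟨hUS.trans hST, hU⟩ hUS)⟩, hST⟩

lemma isCap_of_forall_spec_inter_nonempty (hfin : ∀ n, (level P n).Finite) {D : Set P}
    (h : ∀ S ∈ Spec P, (S ∩ D).Nonempty) : IsCap D := by
  by_contra hD
  have hsel : IsSelector {a : P | ∀ d ∈ D, ¬ a ≤ d} := by
    rintro C ⟨m, hm⟩
    obtain ⟨a, ha, hna⟩ : ∃ a ∈ level P m, ∀ d ∈ D, ¬ a ≤ d := by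
      simpa [refines] using fun h' => hD ⟨m, h'⟩
    obtain ⟨c, hc, hac⟩ := hm a ha
    exact ⟨c, fun d hd hcd => hna d hd (hac.trans hcd), hc⟩
  obtain ⟨S, hS, hST⟩ := hsel.exists_spec_subset hfin
  obtain ⟨x, hxS, hxD⟩ := h S hS
  exact hST hxS x hxD le_rfl

end Selectors

namespace Spec

variable {P : Type*} [PartialOrder P] {S : Set P}

lemma exists_isCap_inter_eq_singleton (hS : S ∈ Spec P) {p : P} (hp : p ∈ S) :
    ∃ C, IsCap C ∧ S ∩ C = {p} := by
  have hnsel : ¬ IsSelector (S \ {p}) := by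
    intro hsel
    have hpS' : p ∈ S \ {p} := by rw [hS.2 _ Set.sdiff_subset hsel]; exact hp
    exact hpS'.2 rfl
  obtain ⟨C, ⟨n, hn⟩, hC⟩ : ∃ C, IsCap C ∧ ¬ ((S \ {p}) ∩ C).Nonempty := by
    simpa [IsSelector] using hnsel
  refine ⟨insert p C, ⟨n, fun a ha => ?_⟩, ?_⟩
  · obtain ⟨c, hc, hac⟩ := hn a ha
    exact ⟨c, Set.mem_insert_of_mem p hc, hac⟩
  · ext x
    refine ⟨fun ⟨hxS, hx⟩ => ?_, ?_⟩
    · by_contra hxp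
      exact hC ⟨x, ⟨hxS, hxp⟩, hx.resolve_left hxp⟩
    · rintro rfl
      exact ⟨hp, Set.mem_insert x C⟩

lemma mem_of_le (hS : S ∈ Spec P) {p q : P} (hp : p ∈ S) (hpq : p ≤ q) : q ∈ S := by
  obtain ⟨C, ⟨n, hn⟩, hC⟩ := exists_isCap_inter_eq_singleton hS hp
  have hcap : IsCap (insert q (C \ {p})) := by
    refine ⟨n, fun a ha => ?_⟩
    obtain ⟨c, hc, hac⟩ := hn a ha
    by_cases hcp : c = p
    · exact ⟨q, Set.mem_insert q _, hac.trans (hcp ▸ hpq)⟩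
    · exact ⟨c, Set.mem_insert_of_mem q ⟨hc, hcp⟩, hac⟩
  obtain ⟨x, hxS, rfl | ⟨hxC, hxp⟩⟩ := hS.1 _ hcap
  · exact hxS
  · exact absurd (hC ▸ ⟨hxS, hxC⟩ : x ∈ ({p} : Set P)) hxp

lemma eventually_le (hS : S ∈ Spec P) {p : P} (hp : p ∈ S) :
    ∃ m, ∀ n ≥ m, ∀ b ∈ S, b ∈ level P n → b ≤ p := by
  obtain ⟨C, hC, hSC⟩ := exists_isCap_inter_eq_singleton hS hp
  obtain ⟨m, hm⟩ := hC.eventually_refines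
  refine ⟨m, fun n hn b hbS hb => ?_⟩
  obtain ⟨c, hc, hbc⟩ := hm n hn b hb
  have hcp : c ∈ S ∩ C := ⟨mem_of_le hS hbS hbc, hc⟩
  rw [hSC, Set.mem_singleton_iff] at hcp
  exact hcp ▸ hbc

lemma wedge_of_mem (hS : S ∈ Spec P) {p q : P} (hp : p ∈ S) (hq : q ∈ S) : wedge p q := by
  obtain ⟨m₁, hm₁⟩ := eventually_le hS hp
  obtain ⟨m₂, hm₂⟩ := eventually_le hS hq
  obtain ⟨x, hxS, hx⟩ := hS.1 _ (isCap_level (max m₁ m₂))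
  exact ⟨x, hm₁ _ (le_max_left _ _) x hxS hx, hm₂ _ (le_max_right _ _) x hxS hx⟩

lemma mem_of_subset_wedgeSet_of_starBelow (hS : S ∈ Spec P) {p r : P} (hSp : S ⊆ wedgeSet p)
    (hpr : starBelow p r) : r ∈ S := by
  obtain ⟨n, hn⟩ := hpr
  obtain ⟨c, hcS, hc⟩ := hS.1 _ (isCap_level n)
  exact mem_of_le hS hcS (hn c hc (hSp hcS))

lemma exists_starBelow_of_isRegular (hreg : IsRegular P) (hS : S ∈ Spec P) {p₁ p₂ : P}
    (hp₁ : p₁ ∈ S) (hp₂ : p₂ ∈ S) : ∃ p ∈ S, starBelow p p₁ ∧ starBelow p p₂ := by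
  obtain ⟨m₁, hm₁⟩ := eventually_le hS hp₁
  obtain ⟨m₂, hm₂⟩ := eventually_le hS hp₂
  obtain ⟨n, -, hstar⟩ := hreg (max m₁ m₂)
  obtain ⟨p, hpS, hp⟩ := hS.1 _ (isCap_level n)
  obtain ⟨b, hb, hpb⟩ := hstar p hp
  have hbS : b ∈ S :=
    mem_of_subset_wedgeSet_of_starBelow hS (fun _ => wedge_of_mem hS hpS) hpb
  exact ⟨p, hpS, hpb.trans_le (hm₁ _ (le_max_left _ _) b hbS hb),
    hpb.trans_le (hm₂ _ (le_max_right _ _) b hbS hb)⟩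

end Spec

section Topology

variable {P : Type*} [PartialOrder P]

lemma mem_pSBar_of_mem {T : SpecT P} {p : P} (hp : p ∈ T.1) : T ∈ pSBar p :=
  fun _ ht => Spec.wedge_of_mem T.2 hp ht

lemma pSBar_subset_pSOpen {p r : P} (hpr : starBelow p r) : pSBar p ⊆ pSOpen r :=
  fun T hT => Spec.mem_of_subset_wedgeSet_of_starBelow T.2 hT hpr

lemma isOpen_pSOpen (p : P) : IsOpen (pSOpen p) :=
  TopologicalSpace.GenerateOpen.basic _ ⟨p, rfl⟩

lemma exists_pSOpen_subset (hreg : IsRegular P) {U : Set (SpecT P)} (hU : IsOpen U)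
    {S : SpecT P} (hSU : S ∈ U) : ∃ p ∈ S.1, pSOpen p ⊆ U := by
  induction hU with
  | basic V hV =>
    obtain ⟨q, rfl⟩ := hV
    exact ⟨q, hSU, le_rfl⟩
  | univ =>
    obtain ⟨p, hpS, -⟩ := S.2.1 _ (isCap_level 0)
    exact ⟨p, hpS, Set.subset_univ _⟩
  | inter U V _ _ ihU ihV =>
    obtain ⟨p₁, hp₁, hsub₁⟩ := ihU hSU.1
    obtain ⟨p₂, hp₂, hsub₂⟩ := ihV hSU.2
    obtain ⟨p, hpS, hp₁', hp₂'⟩ := Spec.exists_starBelow_of_isRegular hreg S.2 hp₁ hp₂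
    exact ⟨p, hpS, fun T hT =>
      ⟨hsub₁ (pSBar_subset_pSOpen hp₁' (mem_pSBar_of_mem hT)),
        hsub₂ (pSBar_subset_pSOpen hp₂' (mem_pSBar_of_mem hT))⟩⟩
  | sUnion 𝒰 _ ih =>
    obtain ⟨V, hV𝒰, hSV⟩ := hSU
    obtain ⟨p, hpS, hsub⟩ := ih V hV𝒰 hSV
    exact ⟨p, hpS, hsub.trans (Set.subset_sUnion_of_mem hV𝒰)⟩

lemma exists_pSBar_subset (hreg : IsRegular P) {U : Set (SpecT P)} (hU : IsOpen U)
    {S : SpecT P} (hSU : S ∈ U) : ∃ p ∈ S.1, pSBar p ⊆ U := by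
  obtain ⟨q, hqS, hqU⟩ := exists_pSOpen_subset hreg hU hSU
  obtain ⟨p, hpS, hpq, -⟩ := Spec.exists_starBelow_of_isRegular hreg S.2 hqS hqS
  exact ⟨p, hpS, (pSBar_subset_pSOpen hpq).trans hqU⟩

end Topology

section Refiners

variable {P Q : Type*} [PartialOrder P] [PartialOrder Q]

lemma IsRefinerRel.mono {R R' : Q → P → Prop} (hR : IsRefinerRel R)
    (hRR' : ∀ q p, R q p → R' q p) : IsRefinerRel R' := by
  intro C hC
  obtain ⟨B, hB, hBC⟩ := hR C hC
  refine ⟨B, hB, fun b hb => ?_⟩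
  obtain ⟨c, hc, hcb⟩ := hBC b hb
  exact ⟨c, hc, hRR' c b hcb⟩

variable {φ : SpecT P → SpecT Q}

lemma relBarPhi_of_relPhi {q : Q} {p : P} (h : relPhi φ q p) : relBarPhi φ q p :=
  fun S hS => mem_pSBar_of_mem (h S hS)

lemma exists_relPhi_of_mem (hregP : IsRegular P) (hφ : Continuous φ) {S : SpecT P} {q : Q}
    (hq : q ∈ (φ S).1) : ∃ p ∈ S.1, relPhi φ q p :=
  exists_pSBar_subset hregP ((isOpen_pSOpen q).preimage hφ) hq

lemma isRefinerRel_relPhi (hP : IsOmegaPoset P) (hregP : IsRegular P) (hφ : Continuous φ) :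
    IsRefinerRel (relPhi φ) := by
  intro C hC
  refine ⟨{p | ∃ c ∈ C, relPhi φ c p}, isCap_of_forall_spec_inter_nonempty hP.1 ?_, fun _ => id⟩
  intro S hS
  obtain ⟨c, hcS, hcC⟩ := (φ ⟨S, hS⟩).2.1 C hC
  obtain ⟨p, hpS, hp⟩ := exists_relPhi_of_mem hregP hφ hcS
  exact ⟨p, hpS, c, hcC, hp⟩

lemma specMapOf_of_relPhi_le_of_le_relBarPhi (hregP : IsRegular P) (hregQ : IsRegular Q)
    (hφ : Continuous φ) {R : Q → P → Prop} (hPhiR : ∀ q p, relPhi φ q p → R q p)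
    (hRBar : ∀ q p, R q p → relBarPhi φ q p) : specMapOf R φ := by
  intro S
  ext r
  constructor
  · intro hr
    obtain ⟨q, hqS, hqr, -⟩ := Spec.exists_starBelow_of_isRegular hregQ (φ S).2 hr hr
    obtain ⟨p, hpS, hqp⟩ := exists_relPhi_of_mem hregP hφ hqS
    exact ⟨p, hpS, q, hPhiR q p hqp, hqr⟩
  · rintro ⟨p, hpS, q, hqp, hqr⟩
    exact pSBar_subset_pSOpen hqr (hRBar q p hqp S (mem_pSBar_of_mem hpS))

end Refiners

end OP

open OP in
theorem stmt8_general {P Q : Type*} [PartialOrder P] [PartialOrder Q]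
    (hP : IsOmegaPoset P) (hregP : IsRegular P)
    (φ : SpecT P → SpecT Q) (hφ : Continuous φ) :
    IsRefinerRel (relBarPhi φ) ∧ IsRefinerRel (relPhi φ) ∧
      (IsRegular Q →
        (∀ S : SpecT P, (φ S).1 = {r : Q | ∃ p ∈ S.1, ∃ q, relBarPhi φ q p ∧ starBelow q r}) ∧
        (∀ S : SpecT P, (φ S).1 = {r : Q | ∃ p ∈ S.1, ∃ q, relPhi φ q p ∧ starBelow q r})) := by
  have hrefiner := isRefinerRel_relPhi hP hregP hφ
  refine ⟨hrefiner.mono fun _ _ => relBarPhi_of_relPhi, hrefiner, fun hregQ => ⟨?_, ?_⟩⟩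
  · exact specMapOf_of_relPhi_le_of_le_relBarPhi hregP hregQ hφ
      (fun _ _ => relBarPhi_of_relPhi) fun _ _ => id
  · exact specMapOf_of_relPhi_le_of_le_relBarPhi hregP hregQ hφ
      (fun _ _ => id) fun _ _ => relBarPhi_of_relPhi

open OP in
/-- For continuous `φ : SP → SQ` with `P` regular, the relations `⊒_φ` and `⊐_φ` are
refiners, and if `Q` is also regular then `φ(S) = S^{⊑_φ ⊲}` (likewise for `⊐_φ`). -/
theorem stmt8 {P Q : Type*} [PartialOrder P] [PartialOrder Q]
    (hP : IsOmegaPoset P) (hQ : IsOmegaPoset Q) (hregP : IsRegular P)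
    (φ : SpecT P → SpecT Q) (hφ : Continuous φ) :
    IsRefinerRel (relBarPhi φ) ∧ IsRefinerRel (relPhi φ) ∧
      (IsRegular Q →
        (∀ S : SpecT P, (φ S).1 = {r : Q | ∃ p ∈ S.1, ∃ q, relBarPhi φ q p ∧ starBelow q r}) ∧
        (∀ S : SpecT P, (φ S).1 = {r : Q | ∃ p ∈ S.1, ∃ q, relPhi φ q p ∧ starBelow q r})) :=
  stmt8_general hP hregP φ hφ
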